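/- arXiv:1407.1130 — 6 statements merged into one kernel-verified Lean document; each statement's English description precedes it below -/
import Mathlib

section
/- Let R = A[u]/(u^(N+1)), let ε : R → R be the A-algebra homomorphism with ε(u) = -u·(1+u)^(-1), and for an integer n define the A-linear map i_n : R → R by i_n(α) = (1+u)^n · ε(α) (where (1+u)^n is the n-th power of the unit 1+u in R, allowing negative n). Then i_n ∘ i_n is the identity on R, i.e., i_n is an A-linear involutive automorphism of R. -/
open Polynomial Finset

/-- `R = A[u]/(u^(N+1))`. -/
abbrev TruncPoly (A : Type*) [CommRing A] (N : ℕ) : Type _ :=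
  Polynomial A ⧸ Ideal.span {(X : Polynomial A) ^ (N + 1)}

/-- With `ε` the `A`-algebra homomorphism of `R = A[u]/(u^(N+1))` sending `u` to
`-u·(1+u)⁻¹`, and `i_n(α) = (1+u)^n · ε(α)` (powers of the unit `1+u`, `n ∈ ℤ`),
the map `i_n` is an involutive `A`-linear automorphism of `R`. -/
theorem stmt_2 (A : Type*) [CommRing A] (N : ℕ) (n : ℤ)
    (u : TruncPoly A N) (hu : u = Ideal.Quotient.mk _ X)
    (v : (TruncPoly A N)ˣ) (hv : (v : TruncPoly A N) = 1 + u)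
    (ε : TruncPoly A N →ₐ[A] TruncPoly A N)
    (hε : ε u = -u * ((v⁻¹ : (TruncPoly A N)ˣ) : TruncPoly A N))
    (i : TruncPoly A N → TruncPoly A N)
    (hi : ∀ α, i α = ((v ^ n : (TruncPoly A N)ˣ) : TruncPoly A N) * ε α) :
    (∀ α, i (i α) = α) ∧ Function.Bijective i ∧
      (∀ α β, i (α + β) = i α + i β) ∧
      (∀ (c : A) (α : TruncPoly A N), i (c • α) = c • i α) := by
  -- ε (v) = v⁻¹ as elements
  have hεv : ε (v : TruncPoly A N) = ((v⁻¹ : (TruncPoly A N)ˣ) : TruncPoly A N) := by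
    rw [hv, map_add, map_one, hε]
    have h1 : (1 : TruncPoly A N) + -u * ((v⁻¹ : (TruncPoly A N)ˣ) : TruncPoly A N)
        = ((v : TruncPoly A N) - u) * ((v⁻¹ : (TruncPoly A N)ˣ) : TruncPoly A N) := by
      rw [sub_mul, Units.mul_inv]; ring
    rw [h1, hv, add_sub_cancel_right, one_mul]
  have hεvinv : ε ((v⁻¹ : (TruncPoly A N)ˣ) : TruncPoly A N) = (v : TruncPoly A N) := by
    have h2 := congrArg ε (Units.inv_mul v)
    rw [map_mul, map_one, hεv] at h2
    calc ε ((v⁻¹ : (TruncPoly A N)ˣ) : TruncPoly A N)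
        = ε ((v⁻¹ : (TruncPoly A N)ˣ) : TruncPoly A N)
            * ((v⁻¹ : (TruncPoly A N)ˣ) : TruncPoly A N) * (v : TruncPoly A N) := by
          rw [mul_assoc, Units.inv_mul, mul_one]
      _ = (v : TruncPoly A N) := by rw [h2, one_mul]
  -- ε ∘ ε = id
  have hεε : ∀ α : TruncPoly A N, ε (ε α) = α := by
    have key : (ε.comp ε).comp (Ideal.Quotient.mkₐ A (Ideal.span {(X : Polynomial A) ^ (N + 1)}))
        = (AlgHom.id A (TruncPoly A N)).comp (Ideal.Quotient.mkₐ A _) := by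
      apply Polynomial.algHom_ext
      simp only [AlgHom.comp_apply, Ideal.Quotient.mkₐ_eq_mk, AlgHom.id_apply]
      rw [← hu, hε, map_mul, map_neg, hε, hεvinv]
      rw [show -(-u * ((v⁻¹ : (TruncPoly A N)ˣ) : TruncPoly A N))
            = u * ((v⁻¹ : (TruncPoly A N)ˣ) : TruncPoly A N) by ring,
          mul_assoc, Units.inv_mul, mul_one]
    intro α
    simpa using DFunLike.congr_fun (Ideal.Quotient.algHom_ext _ key) α
  -- ε of v^n
  have hεvn : ε ((v ^ n : (TruncPoly A N)ˣ) : TruncPoly A N)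
      = ((v ^ (-n) : (TruncPoly A N)ˣ) : TruncPoly A N) := by
    have hmap : Units.map (ε : TruncPoly A N →* TruncPoly A N) v = v⁻¹ := by
      ext; simpa using hεv
    calc ε ((v ^ n : (TruncPoly A N)ˣ) : TruncPoly A N)
        = ((Units.map (ε : TruncPoly A N →* TruncPoly A N) (v ^ n) : (TruncPoly A N)ˣ)
          : TruncPoly A N) := rfl
      _ = ((v ^ (-n) : (TruncPoly A N)ˣ) : TruncPoly A N) := by
          rw [map_zpow, hmap, zpow_neg, inv_zpow]
  have hinv : ∀ α, i (i α) = α := by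
    intro α
    rw [hi, hi, map_mul, hεvn, hεε, ← mul_assoc, ← Units.val_mul, ← zpow_add, add_neg_cancel,
      zpow_zero, Units.val_one, one_mul]
  refine ⟨hinv, Function.bijective_iff_has_inverse.mpr ⟨i, hinv, hinv⟩, ?_, ?_⟩
  · intro α β; rw [hi, hi, hi, map_add, mul_add]
  · intro c α
    rw [hi, hi, map_smul, mul_smul_comm]
end

section
/- Let B be a commutative ring, t ∈ B a nilpotent element (so 1+t is a unit), and let M be a B-module with a direct sum decomposition M = ⊕_{i=0}^{N} M_i. Define the B-linear map T : M → M ('tensor by t') by T(α) = (1+t)^(-i) · α for α ∈ M_i, extended additively. Let e ∈ B be another nilpotent element such that e·M_i ⊆ M_{i+1} for all i (and e·M_N = 0). Then for every α ∈ M: T((1+e)·α) = (1+e+t)·(1+t)^(-1)·T(α). -/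
/-- Module-theoretic model of Aluffi's tensor formula for a line bundle `E` with
`c(E) = 1 + e`: if `M = ⊕_{i=0}^N M_i`, `t` is nilpotent (so `1+t` is the unit `v`),
`T` acts by `(1+t)^(-i)` on `M_i`, and `e` is nilpotent with `e·M_i ⊆ M_{i+1}`
(and `e·M_N = 0`), then `T((1+e)·α) = (1+e+t)(1+t)⁻¹·T(α)` for all `α`. -/
theorem stmt_5 (B : Type*) [CommRing B] (M : Type*) [AddCommGroup M] [Module B M]
    (N : ℕ) (P : ℕ → Submodule B M)
    (hdec : DirectSum.IsInternal fun i => P i)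
    (htop : ∀ i, N < i → P i = ⊥)
    (t : B) (ht : IsNilpotent t) (v : Bˣ) (hv : (v : B) = 1 + t)
    (T : M →ₗ[B] M)
    (hT : ∀ i, ∀ α ∈ P i, T α = (((v⁻¹ : Bˣ) : B)) ^ i • α)
    (e : B) (he : IsNilpotent e)
    (hraise : ∀ i, ∀ α ∈ P i, e • α ∈ P (i + 1)) :
    ∀ α : M, T ((1 + e) • α) = ((1 + e + t) * ((v⁻¹ : Bˣ) : B)) • T α := by
  have hsup : (⨆ i, P i) = ⊤ := hdec.submodule_iSup_eq_top
  intro α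
  have hα : α ∈ (⨆ i, P i) := hsup ▸ Submodule.mem_top
  induction hα using Submodule.iSup_induction' with
  | mem i x hx =>
    have hex : e • x ∈ P (i + 1) := hraise i x hx
    have h1 : T ((1 + e) • x) = ((v⁻¹ : Bˣ) : B) ^ i • x
        + (((v⁻¹ : Bˣ) : B) ^ (i + 1) * e) • x := by
      rw [add_smul, one_smul, map_add, hT i x hx, hT (i+1) _ hex, smul_smul]
    have h2 : (1 + e + t) * ((v⁻¹ : Bˣ) : B)
        = 1 + e * ((v⁻¹ : Bˣ) : B) := by
      have : (1 : B) + e + t = (v : B) + e := by rw [hv]; ring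
      rw [this, add_mul, v.mul_inv]
    rw [h1, hT i x hx, h2, add_smul, one_smul, smul_smul]
    congr 1
    · congr 1
      ring
  | zero => simp
  | add x y _ _ hx hy => rw [smul_add, map_add, map_add, smul_add, hx, hy]
end

section
/- Let B be a commutative ring, t, e_1, ..., e_r ∈ B nilpotent elements, M = ⊕_{i=0}^{N} M_i a graded B-module with e_k · M_i ⊆ M_{i+1} for all k, i (and e_k · M_N = 0), and T : M → M the B-linear map acting by (1+t)^(-i) on M_i. Then for every α ∈ M: T( (∏_{k=1}^{r} (1+e_k)) · α ) = (∏_{k=1}^{r} (1+e_k+t)) · (1+t)^(-r) · T(α). -/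
/-!
Capping with a Chern root `e` raises the degree by one, so on homogeneous elements
`T (e • α) = u * e • T α` with `u = (1 + t)⁻¹`; by linearity this holds on all of `M`.
Hence `T` intertwines multiplication by `∏ (1 + e k)` with multiplication by `∏ (1 + u * e k)`,
and `1 + u * e k = (1 + e k + t) * u`.
-/

open Finset

theorem map_prod_smul_eq_prod_smul_map {ι B M M' : Type*} [CommMonoid B] [MulAction B M]
    [MulAction B M'] (T : M → M') (s : Finset ι) {f g : ι → B}
    (h : ∀ k ∈ s, ∀ α, T (f k • α) = g k • T α) (α : M) :
    T ((∏ k ∈ s, f k) • α) = (∏ k ∈ s, g k) • T α := by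
  classical
  induction s using Finset.induction_on generalizing α with
  | empty => simp
  | insert k s hk ih =>
    rw [prod_insert hk, prod_insert hk, mul_smul, mul_smul, h k (mem_insert_self k s),
      ih (fun j hj => h j (mem_insert_of_mem hj))]

section GradedScaling

variable {B M : Type*} [CommRing B] [AddCommGroup M] [Module B M] {P : ℕ → Submodule B M}
  {T : M →ₗ[B] M} {u x : B}

theorem map_smul_eq_of_raises_degree (hP : ⨆ i, P i = ⊤)
    (hT : ∀ i, ∀ α ∈ P i, T α = u ^ i • α) (hx : ∀ i, ∀ α ∈ P i, x • α ∈ P (i + 1))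
    (α : M) : T (x • α) = (u * x) • T α := by
  have hα : α ∈ ⨆ i, P i := hP ▸ Submodule.mem_top
  induction hα using Submodule.iSup_induction' with
  | mem i α hα =>
    rw [hT (i + 1) _ (hx i α hα), hT i α hα, smul_smul, smul_smul, pow_succ]
    ring_nf
  | zero => simp
  | add α β _ _ hα hβ => rw [smul_add, map_add, map_add, smul_add, hα, hβ]

theorem map_one_add_smul_eq_of_raises_degree (hP : ⨆ i, P i = ⊤)
    (hT : ∀ i, ∀ α ∈ P i, T α = u ^ i • α) (hx : ∀ i, ∀ α ∈ P i, x • α ∈ P (i + 1))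
    (α : M) : T ((1 + x) • α) = (1 + u * x) • T α := by
  rw [add_smul, add_smul, one_smul, one_smul, map_add, map_smul_eq_of_raises_degree hP hT hx]

end GradedScaling

theorem stmt_6_general (B : Type*) [CommRing B] (M : Type*) [AddCommGroup M] [Module B M]
    (r : ℕ) (P : ℕ → Submodule B M)
    (hdec : DirectSum.IsInternal fun i => P i)
    (t : B) (v : Bˣ) (hv : (v : B) = 1 + t)
    (e : Fin r → B)
    (hraise : ∀ (k : Fin r) (i : ℕ), ∀ α ∈ P i, e k • α ∈ P (i + 1))
    (T : M →ₗ[B] M)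
    (hT : ∀ i, ∀ α ∈ P i, T α = (((v⁻¹ : Bˣ) : B)) ^ i • α) :
    ∀ α : M,
      T ((∏ k, (1 + e k)) • α)
        = ((∏ k, (1 + e k + t)) * ((v⁻¹ : Bˣ) : B) ^ r) • T α := by
  intro α
  have hinv : ((v⁻¹ : Bˣ) : B) * (1 + t) = 1 := hv ▸ v.inv_mul
  have hcoef : (∏ k, (1 + e k + t)) * ((v⁻¹ : Bˣ) : B) ^ r
      = ∏ k, (1 + ((v⁻¹ : Bˣ) : B) * e k) := by
    have := prod_mul_pow_card (s := univ) (f := fun k => 1 + e k + t) (b := ((v⁻¹ : Bˣ) : B))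
    rw [card_univ, Fintype.card_fin] at this
    rw [this]
    exact prod_congr rfl fun k _ => by linear_combination hinv
  rw [hcoef]
  exact map_prod_smul_eq_prod_smul_map T univ (fun k _ =>
    map_one_add_smul_eq_of_raises_degree hdec.submodule_iSup_eq_top hT (hraise k)) α

/-- Rank-`r` version of Aluffi's tensor formula: with Chern roots `e_1, ..., e_r`
(nilpotent, raising the grading by one and killing top degree) and `t` nilpotent with
unit `v = 1 + t`, and `T` acting by `(1+t)^(-i)` on `M_i`, one has
`T((∏_k (1+e_k))·α) = (∏_k (1+e_k+t))·(1+t)^(-r)·T(α)`. -/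
theorem stmt_6 (B : Type*) [CommRing B] (M : Type*) [AddCommGroup M] [Module B M]
    (N r : ℕ) (P : ℕ → Submodule B M)
    (hdec : DirectSum.IsInternal fun i => P i)
    (htop : ∀ i, N < i → P i = ⊥)
    (t : B) (ht : IsNilpotent t) (v : Bˣ) (hv : (v : B) = 1 + t)
    (e : Fin r → B) (he : ∀ k, IsNilpotent (e k))
    (hraise : ∀ (k : Fin r) (i : ℕ), ∀ α ∈ P i, e k • α ∈ P (i + 1))
    (T : M →ₗ[B] M)
    (hT : ∀ i, ∀ α ∈ P i, T α = (((v⁻¹ : Bˣ) : B)) ^ i • α) :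
    ∀ α : M,
      T ((∏ k, (1 + e k)) • α)
        = ((∏ k, (1 + e k + t)) * ((v⁻¹ : Bˣ) : B) ^ r) • T α :=
  stmt_6_general B M r P hdec t v hv e hraise T hT
end

section
/- Let R = ℤ[u]/(u^(N+1)), let m be an integer, let ε_m : R → R be the ring homomorphism with ε_m(u) = -u·(1+mu)^(-1), and for n ∈ ℤ define i_{n,m}(α) = (1+mu)^n · ε_m(α). Then for β = ∑_{j=0}^{N} β_j u^j with β_j ∈ ℤ, the u^i-coefficient of i_{n,m}(β) equals ∑_{j=0}^{i} (-1)^j · binom(n-j, i-j) · m^(i-j) · β_j, where binom(a, b) for a ∈ ℤ, b ∈ ℕ denotes the generalized (falling-factorial) binomial coefficient a(a-1)⋯(a-b+1)/b!. -/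
open Polynomial Finset

/-- `R = ℤ[u]/(u^(N+1))`, the Chow group of `ℙ^N`. -/
abbrev ChowPN (N : ℕ) : Type _ :=
  Polynomial ℤ ⧸ Ideal.span {(X : Polynomial ℤ) ^ (N + 1)}

/-! Because `u` is nilpotent, the binomial series terminates: `(1 + m u)^z = ∑_k binom(z, k) m^k u^k`
for every integer `z` (induction on `z` via Pascal's rule). Since `ε(u)^j = (-u)^j (1 + m u)^(-j)`,
the term `β_j u^j` contributes `(-1)^j β_j u^j (1 + m u)^(n - j)`, and collecting the coefficient of
`u^i` in this Cauchy product gives the formula. -/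

section Nilpotent

variable {A : Type*} [CommRing A] {N : ℕ} {x : A}

theorem sum_sum_mul_pow_add_of_pow_eq_zero (hx : x ^ (N + 1) = 0) (f : ℕ → ℕ → A) :
    ∑ j ∈ range (N + 1), ∑ k ∈ range (N + 1), f j k * x ^ (j + k)
      = ∑ i ∈ range (N + 1), (∑ j ∈ range (i + 1), f j (i - j)) * x ^ i := by
  have hdiag : ∀ i, (∑ j ∈ range (i + 1), f j (i - j)) * x ^ i
      = ∑ j ∈ range (i + 1), f j (i - j) * x ^ (j + (i - j)) := by
    intro i
    rw [sum_mul]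
    refine sum_congr rfl fun j hj => ?_
    rw [Nat.add_sub_cancel' (Nat.lt_succ_iff.mp (mem_range.mp hj))]
  simp_rw [hdiag]
  rw [sum_range_diag_flip (N + 1) fun j k => f j k * x ^ (j + k)]
  refine sum_congr rfl fun j hj => (sum_subset (range_subset_range.mpr (by omega)) ?_).symm
  intro k hk hk'
  simp only [mem_range] at hk hk'
  rw [pow_eq_zero_of_le (by omega) hx, mul_zero]

theorem sum_choose_smul_pow_mul_one_add (hx : x ^ (N + 1) = 0) (z : ℤ) :
    (∑ k ∈ range (N + 1), Ring.choose z k • x ^ k) * (1 + x)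
      = ∑ k ∈ range (N + 1), Ring.choose (z + 1) k • x ^ k := by
  rw [mul_one_add, sum_mul]
  simp_rw [smul_mul_assoc, ← pow_succ]
  rw [sum_range_succ (fun k => Ring.choose z k • x ^ (k + 1)), hx, smul_zero, add_zero,
    sum_range_succ', sum_range_succ' (fun k => Ring.choose (z + 1) k • x ^ k)]
  simp only [Ring.choose_succ_succ, add_smul, sum_add_distrib, Ring.choose_zero_right]
  abel

theorem Units.val_zpow_eq_sum_choose_smul_pow (v : Aˣ) (hv : (v : A) = 1 + x)
    (hx : x ^ (N + 1) = 0) (z : ℤ) :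
    ((v ^ z : Aˣ) : A) = ∑ k ∈ range (N + 1), Ring.choose z k • x ^ k := by
  induction z using Int.induction_on with
  | zero =>
    rw [zpow_zero, Units.val_one, sum_range_succ']
    simp [Ring.choose_zero_succ]
  | succ k ih =>
    rw [zpow_add_one, Units.val_mul, ih, hv, sum_choose_smul_pow_mul_one_add hx]
  | pred k ih =>
    calc ((v ^ (-(k : ℤ) - 1) : Aˣ) : A) = ((v ^ (-(k : ℤ)) : Aˣ) : A) * ((v⁻¹ : Aˣ) : A) := by
          rw [← Units.val_mul, zpow_sub_one]
      _ = (∑ i ∈ range (N + 1), Ring.choose (-(k : ℤ) - 1) i • x ^ i) * (1 + x)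
            * ((v⁻¹ : Aˣ) : A) := by
          rw [sum_choose_smul_pow_mul_one_add hx, sub_add_cancel, ih]
      _ = ∑ i ∈ range (N + 1), Ring.choose (-(k : ℤ) - 1) i • x ^ i := by
          rw [← hv, mul_assoc, Units.mul_inv, mul_one]

theorem Units.val_zpow_mul_map_sum_smul_pow {u : A} (hu : u ^ (N + 1) = 0) (n m : ℤ) {v : Aˣ}
    (hv : (v : A) = 1 + (m : A) * u) {ε : A →+* A} (hε : ε u = -u * ((v⁻¹ : Aˣ) : A))
    (β : ℕ → ℤ) :
    ((v ^ n : Aˣ) : A) * ε (∑ j ∈ range (N + 1), β j • u ^ j)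
      = ∑ i ∈ range (N + 1),
          (∑ j ∈ range (i + 1),
            (-1 : ℤ) ^ j * Ring.choose (n - (j : ℤ)) (i - j) * m ^ (i - j) * β j) • u ^ i := by
  have hmu : ((m : A) * u) ^ (N + 1) = 0 := by rw [mul_pow, hu, mul_zero]
  have hterm : ∀ j : ℕ, ((v ^ n : Aˣ) : A) * ε (β j • u ^ j)
      = ∑ k ∈ range (N + 1),
          (((-1 : ℤ) ^ j * Ring.choose (n - (j : ℤ)) k * m ^ k * β j : ℤ) : A) * u ^ (j + k) := by
    intro j
    have hshift : ((v ^ n : Aˣ) : A) * ((v⁻¹ : Aˣ) : A) ^ j = ((v ^ (n - j) : Aˣ) : A) := by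
      rw [← Units.val_pow_eq_pow_val, ← Units.val_mul, inv_pow, ← zpow_natCast, ← zpow_neg,
        ← zpow_add, ← sub_eq_add_neg]
    calc ((v ^ n : Aˣ) : A) * ε (β j • u ^ j)
        = (((-1 : ℤ) ^ j * β j : ℤ) : A) * u ^ j
            * (((v ^ n : Aˣ) : A) * ((v⁻¹ : Aˣ) : A) ^ j) := by
          rw [map_zsmul, map_pow, hε, zsmul_eq_mul]
          push_cast
          ring
      _ = _ := by
          rw [hshift, Units.val_zpow_eq_sum_choose_smul_pow v hv hmu, mul_sum]
          refine sum_congr rfl fun k _ => ?_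
          rw [zsmul_eq_mul]
          push_cast
          ring
  rw [map_sum, mul_sum]
  simp_rw [hterm]
  rw [sum_sum_mul_pow_add_of_pow_eq_zero hu]
  refine sum_congr rfl fun i _ => ?_
  rw [zsmul_eq_mul, Int.cast_sum]

end Nilpotent

/-- In `R = ℤ[u]/(u^(N+1))`, with `ε_m` the ring homomorphism sending `u` to
`-u(1+mu)⁻¹` and `i_{n,m}(α) = (1+mu)^n ε_m(α)`, the `u^i`-coefficient of
`i_{n,m}(∑ β_j u^j)` is `∑_{j=0}^{i} (-1)^j binom(n-j, i-j) m^(i-j) β_j`, where `binom`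
is the generalized integer binomial coefficient (`Ring.choose`). -/
theorem stmt_10 (N : ℕ) (n m : ℤ)
    (u : ChowPN N) (hu : u = Ideal.Quotient.mk _ X)
    (v : (ChowPN N)ˣ) (hv : (v : ChowPN N) = 1 + (m : ChowPN N) * u)
    (ε : ChowPN N →+* ChowPN N)
    (hε : ε u = -u * ((v⁻¹ : (ChowPN N)ˣ) : ChowPN N))
    (β : ℕ → ℤ) :
    ((v ^ n : (ChowPN N)ˣ) : ChowPN N) * ε (∑ j ∈ Finset.range (N + 1), β j • u ^ j)
      = ∑ i ∈ Finset.range (N + 1),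
          (∑ j ∈ Finset.range (i + 1),
            (-1 : ℤ) ^ j * Ring.choose (n - (j : ℤ)) (i - j) * m ^ (i - j) * β j) • u ^ i := by
  have hu_nilpotent : u ^ (N + 1) = 0 := by
    rw [hu, ← map_pow, Ideal.Quotient.eq_zero_iff_mem]
    exact Ideal.subset_span rfl
  exact Units.val_zpow_mul_map_sum_smul_pow hu_nilpotent n m hv hε β
end

section
/- Let R = ℤ[x,y]/(x^(N+1), y^(N+1)), let n, m be integers, and define α = ∑_{0 ≤ i, j ≤ N} a_{i,j} x^i y^j ∈ R where a_{N-j, i} = (-1)^j · binom(n-j, i-j) · m^(i-j) for 0 ≤ i, j ≤ N (with binom the generalized integer binomial coefficient, equal to 0 when i < j). Then the induced endomorphism β ↦ (∑_j a_{N-j,i} β_j)_i of ℤ^(N+1) is an involution: applying it twice returns β. -/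
/-!
The coefficients form a lower triangular matrix `A i j`. Its square has `(i, k)` entry
`m ^ d * ∑ l, (-1) ^ l * C(r, l) * C(r - l, d - l)` with `r = n - k` and `d = i - k`, and the
identity `C(r, l) * C(r - l, d - l) = C(d, l) * C(r, d)` turns this into
`m ^ d * C(r, d) * ∑ l, (-1) ^ l * C(d, l)`, which vanishes unless `d = 0`.
-/

open Finset

section

variable {R : Type*} [CommRing R] [BinomialRing R]

theorem Ring.alternating_sum_range_choose_mul_choose (r : R) (d : ℕ) :
    ∑ l ∈ range (d + 1), (-1 : R) ^ l * (Ring.choose r l * Ring.choose (r - l) (d - l)) =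
      if d = 0 then 1 else 0 := by
  have hterm : ∀ l ∈ range (d + 1),
      (-1 : R) ^ l * (Ring.choose r l * Ring.choose (r - l) (d - l)) =
        (((-1 : ℤ) ^ l * d.choose l : ℤ) : R) * Ring.choose r d := by
    intro l hl
    rw [← Ring.choose_smul_choose r (Nat.lt_succ_iff.mp (mem_range.mp hl)), nsmul_eq_mul]
    push_cast
    ring
  rw [sum_congr rfl hterm, ← sum_mul, ← Int.cast_sum, Int.alternating_sum_range_choose]
  split_ifs with hd
  · simp [hd]
  · simp

/-- `fullwoodCoeff n m i j` is the coefficient `a_{N-j,i}`, independent of `N`. -/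
def fullwoodCoeff (n m : R) (i j : ℕ) : R :=
  if j ≤ i then (-1) ^ j * Ring.choose (n - j) (i - j) * m ^ (i - j) else 0

theorem fullwoodCoeff_of_lt (n m : R) {i j : ℕ} (h : i < j) : fullwoodCoeff n m i j = 0 :=
  if_neg h.not_ge

theorem sum_Ico_fullwoodCoeff_mul_fullwoodCoeff (n m : R) {i k : ℕ} (hki : k ≤ i) :
    ∑ j ∈ Ico k (i + 1), fullwoodCoeff n m i j * fullwoodCoeff n m j k =
      if k = i then 1 else 0 := by
  obtain ⟨d, rfl⟩ := Nat.exists_eq_add_of_le hki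
  have hterm : ∀ l ∈ range (d + 1),
      fullwoodCoeff n m (k + d) (k + l) * fullwoodCoeff n m (k + l) k =
        m ^ d * ((-1 : R) ^ l *
          (Ring.choose (n - k) l * Ring.choose (n - k - l) (d - l))) := by
    intro l hl
    have hld : l ≤ d := Nat.lt_succ_iff.mp (mem_range.mp hl)
    obtain ⟨e, rfl⟩ := Nat.exists_eq_add_of_le hld
    simp only [fullwoodCoeff, add_le_add_iff_left, hld, le_add_iff_nonneg_right, zero_le,
      if_true, Nat.add_sub_add_left, Nat.add_sub_cancel_left, Nat.cast_add, sub_sub]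
    have hsign : (-1 : R) ^ (k + l) * (-1) ^ k = (-1) ^ l := by
      rw [pow_add, mul_right_comm, ← pow_add, Even.neg_one_pow ⟨k, rfl⟩, one_mul]
    rw [← hsign]
    ring
  rw [sum_Ico_eq_sum_range, show k + d + 1 - k = d + 1 by omega, sum_congr rfl hterm,
    ← mul_sum, Ring.alternating_sum_range_choose_mul_choose]
  rcases Nat.eq_zero_or_pos d with rfl | hd
  · simp
  · simp [hd.ne']

theorem sum_range_fullwoodCoeff_mul_fullwoodCoeff (n m : R) {N i : ℕ} (hi : i ≤ N) (k : ℕ) :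
    ∑ j ∈ range (N + 1), fullwoodCoeff n m i j * fullwoodCoeff n m j k =
      if k = i then 1 else 0 := by
  have hsupport : Ico k (i + 1) ⊆ range (N + 1) := fun j hj => by
    simp only [mem_Ico, mem_range] at hj ⊢
    omega
  rw [← sum_subset hsupport fun j _ hj => ?_]
  · by_cases hki : k ≤ i
    · exact sum_Ico_fullwoodCoeff_mul_fullwoodCoeff n m hki
    · have hik : i < k := not_le.mp hki
      simp [Ico_eq_empty_of_le (Nat.succ_le_of_lt hik), hik.ne']
  · rcases lt_or_ge j k with hjk | hkj
    · rw [fullwoodCoeff_of_lt n m hjk, mul_zero]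
    · simp only [mem_Ico, not_and, not_lt] at hj
      rw [fullwoodCoeff_of_lt n m (hj hkj), zero_mul]

end

/-- Fullwood's correspondence is involutive: with
`a_{N-j,i} = (-1)^j binom(n-j, i-j) m^(i-j)` for `0 ≤ i, j ≤ N` (generalized integer
binomial coefficient, zero when `i < j`), the endomorphism
`β ↦ (∑_j a_{N-j,i} β_j)_i` of `ℤ^(N+1)` squares to the identity. -/
theorem stmt_14 (N : ℕ) (n m : ℤ) (a : ℕ → ℕ → ℤ)
    (ha : ∀ i ≤ N, ∀ j ≤ N,
      a (N - j) i = if j ≤ i then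
        (-1 : ℤ) ^ j * Ring.choose (n - (j : ℤ)) (i - j) * m ^ (i - j) else 0) :
    ∀ β : ℕ → ℤ, ∀ i ≤ N,
      ∑ j ∈ Finset.range (N + 1),
        a (N - j) i * (∑ k ∈ Finset.range (N + 1), a (N - k) j * β k) = β i := by
  intro β i hi
  have hA : ∀ i ≤ N, ∀ j ≤ N, a (N - j) i = fullwoodCoeff n m i j := ha
  calc ∑ j ∈ range (N + 1), a (N - j) i * ∑ k ∈ range (N + 1), a (N - k) j * β k
      = ∑ j ∈ range (N + 1), ∑ k ∈ range (N + 1),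
          fullwoodCoeff n m i j * fullwoodCoeff n m j k * β k := by
        refine sum_congr rfl fun j hj => ?_
        rw [mem_range_succ_iff] at hj
        rw [hA i hi j hj, mul_sum]
        refine sum_congr rfl fun k hk => ?_
        rw [hA j hj k (mem_range_succ_iff.mp hk), mul_assoc]
    _ = ∑ k ∈ range (N + 1), (if k = i then 1 else 0) * β k := by
        rw [sum_comm]
        simp_rw [← sum_mul, sum_range_fullwoodCoeff_mul_fullwoodCoeff n m hi]
    _ = β i := by simp [hi]
end

section
/- Let B be a commutative ring, t ∈ B nilpotent, M = ⊕_{i=0}^{N} M_i a graded B-module on which multiplication by t raises degree by one (t·M_i ⊆ M_{i+1}, t·M_N = 0). Let D : M → M be the B-linear 'dual' map acting by (-1)^i on M_i, T : M → M the 'tensor' map acting by (1+t)^(-i) on M_i, and for n ∈ ℤ set i_n(α) = (1+t)^n · T(D(α)). Then i_n ∘ i_n = id_M. -/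
/-!
Write `S = T ∘ D`; it acts on `M_k` by `c ^ k` with `c = -v⁻¹`. Because `t` raises the degree
by one, `S (t • x) = (c * t) • S x`, so `S (v • x) = (1 - v⁻¹ * t) • S x = v⁻¹ • S x`. The units
`u` with `S (u • x) = u⁻¹ • S x` form a subgroup, which contains `v` and `-1`, hence `c` and
every `v ^ n`. Consequently `S (S α) = (c ^ k)⁻¹ • c ^ k • α = α` for `α ∈ M_k`, and
`i_n (i_n α) = v ^ n • S (v ^ n • S α) = S (S α) = α`.
-/

def invEquivariantSubgroup {G M : Type*} [CommGroup G] [MulAction G M] (S : M → M) :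
    Subgroup G where
  carrier := {u | ∀ x, S (u • x) = u⁻¹ • S x}
  one_mem' := by simp
  mul_mem' {u w} hu hw x := by
    rw [mul_smul, hu, hw, smul_smul, mul_inv]
  inv_mem' {u} hu x := by
    have h := hu (u⁻¹ • x)
    rw [smul_inv_smul] at h
    rw [inv_inv, h, smul_inv_smul]

section Graded

variable {B M : Type*} [CommRing B] [AddCommGroup M] [Module B M] {P : ℕ → Submodule B M}

theorem neg_one_mem_invEquivariantSubgroup (S : M →+ M) :
    (-1 : Bˣ) ∈ invEquivariantSubgroup S := fun x => by
  simp [Units.smul_def]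

theorem map_smul_eq_of_smul_mem_succ (hP : ⨆ k, P k = ⊤) {S : M →+ M} {c t : B}
    (hS : ∀ k, ∀ α ∈ P k, S α = c ^ k • α) (ht : ∀ k, ∀ α ∈ P k, t • α ∈ P (k + 1))
    (x : M) : S (t • x) = (c * t) • S x := by
  have hx : x ∈ ⨆ k, P k := hP ▸ Submodule.mem_top
  refine Submodule.iSup_induction P (motive := fun x => S (t • x) = (c * t) • S x) hx
    (fun k α hα => ?_) (by simp)
    (fun x y hx hy => by rw [smul_add, map_add, hx, hy, map_add, smul_add])
  rw [hS (k + 1) _ (ht k α hα), hS k α hα, smul_smul, smul_smul, pow_succ, mul_assoc,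
    mul_comm (c ^ k)]

theorem mem_invEquivariantSubgroup_of_smul_mem_succ (hP : ⨆ k, P k = ⊤) {S : M →+ M}
    {t : B} {v : Bˣ} (hv : (v : B) = 1 + t)
    (hS : ∀ k, ∀ α ∈ P k, S α = ((-v⁻¹ : Bˣ) : B) ^ k • α)
    (ht : ∀ k, ∀ α ∈ P k, t • α ∈ P (k + 1)) : v ∈ invEquivariantSubgroup S := fun x => by
  have hcoeff : 1 + ((-v⁻¹ : Bˣ) : B) * t = ((v⁻¹ : Bˣ) : B) := by
    have := v.inv_mul
    rw [hv] at this
    simp only [Units.val_neg]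
    linear_combination -this
  rw [Units.smul_def, Units.smul_def, hv, add_smul, one_smul, map_add,
    map_smul_eq_of_smul_mem_succ hP hS ht, ← hcoeff, add_smul, one_smul]

theorem map_map_eq_self_of_mem_invEquivariantSubgroup (hP : ⨆ k, P k = ⊤) {S : M →+ M}
    {c : Bˣ} (hc : c ∈ invEquivariantSubgroup S) (hS : ∀ k, ∀ α ∈ P k, S α = (c : B) ^ k • α)
    (x : M) : S (S x) = x := by
  have hx : x ∈ ⨆ k, P k := hP ▸ Submodule.mem_top
  refine Submodule.iSup_induction P (motive := fun x => S (S x) = x) hx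
    (fun k α hα => ?_) (by simp) (fun x y hx hy => by rw [map_add, map_add, hx, hy])
  have hS' : S α = c ^ k • α := by rw [hS k α hα, Units.smul_def, Units.val_pow_eq_pow_val]
  rw [hS', pow_mem hc k α, hS', inv_smul_smul]

end Graded

theorem stmt_15_general (B : Type*) [CommRing B] (M : Type*) [AddCommGroup M] [Module B M]
    (P : ℕ → Submodule B M)
    (hdec : DirectSum.IsInternal fun i => P i)
    (t : B) (v : Bˣ) (hv : (v : B) = 1 + t)
    (hraise : ∀ i, ∀ α ∈ P i, t • α ∈ P (i + 1))
    (D T : M →ₗ[B] M)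
    (hD : ∀ i, ∀ α ∈ P i, D α = ((-1 : B) ^ i) • α)
    (hT : ∀ i, ∀ α ∈ P i, T α = (((v⁻¹ : Bˣ) : B)) ^ i • α)
    (n : ℤ) (i : M → M)
    (hi : ∀ α, i α = ((v ^ n : Bˣ) : B) • T (D α)) :
    ∀ α, i (i α) = α := by
  have hP : ⨆ k, P k = ⊤ := hdec.submodule_iSup_eq_top
  let S : M →+ M := (T ∘ₗ D).toAddMonoidHom
  have hS : ∀ k, ∀ α ∈ P k, S α = ((-v⁻¹ : Bˣ) : B) ^ k • α := fun k α hα => by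
    simp only [S, LinearMap.toAddMonoidHom_coe, LinearMap.coe_comp, Function.comp_apply,
      hD k α hα, map_smul, hT k α hα, smul_smul, Units.val_neg]
    rw [neg_pow ((v⁻¹ : Bˣ) : B), mul_comm]
  have hvS : v ∈ invEquivariantSubgroup S :=
    mem_invEquivariantSubgroup_of_smul_mem_succ hP hv hS hraise
  have hcS : -v⁻¹ ∈ invEquivariantSubgroup S := by
    rw [← neg_one_mul]
    exact mul_mem (neg_one_mem_invEquivariantSubgroup S) (inv_mem hvS)
  intro α
  have hvn : ∀ x, S ((v ^ n : Bˣ) • x) = (v ^ n)⁻¹ • S x := zpow_mem hvS n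
  rw [hi, hi α, ← Units.smul_def, ← Units.smul_def]
  change (v ^ n) • S ((v ^ n) • S α) = α
  rw [hvn, smul_inv_smul, map_map_eq_self_of_mem_invEquivariantSubgroup hP hcS hS]

/-- General module-theoretic form of Fullwood's involution: with `M = ⊕_{i=0}^N M_i` a
graded module over `B`, `t ∈ B` nilpotent raising the grading by one (killing top
degree), `v = 1 + t` a unit, `D` acting by `(-1)^i` and `T` by `(1+t)^(-i)` on `M_i`,
the map `i_n(α) = (1+t)^n · T(D(α))` satisfies `i_n ∘ i_n = id`. -/
theorem stmt_15 (B : Type*) [CommRing B] (M : Type*) [AddCommGroup M] [Module B M]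
    (N : ℕ) (P : ℕ → Submodule B M)
    (hdec : DirectSum.IsInternal fun i => P i)
    (htop : ∀ i, N < i → P i = ⊥)
    (t : B) (ht : IsNilpotent t) (v : Bˣ) (hv : (v : B) = 1 + t)
    (hraise : ∀ i, ∀ α ∈ P i, t • α ∈ P (i + 1))
    (D T : M →ₗ[B] M)
    (hD : ∀ i, ∀ α ∈ P i, D α = ((-1 : B) ^ i) • α)
    (hT : ∀ i, ∀ α ∈ P i, T α = (((v⁻¹ : Bˣ) : B)) ^ i • α)
    (n : ℤ) (i : M → M)
    (hi : ∀ α, i α = ((v ^ n : Bˣ) : B) • T (D α)) :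
    ∀ α, i (i α) = α :=
  stmt_15_general B M P hdec t v hv hraise D T hD hT n i hi
end
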